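/- arXiv:2503.02632 — 2 statements merged into one kernel-verified Lean document; each statement's English description precedes it below -/
import Mathlib

section
/- The four functions Ψ₁,₀(y) = y and Ψⁱ₀,₁(y) = eᵢ (i = 1,2,3) are mode solutions of the linearised wave maps equation with growth rate λ = 1; the nine functions Φⁱ₀,₁(y) = (‖y‖² − 3)eᵢ (i = 1,2,3), Ψ¹₁,₁(y) = (0, −y₃, y₂), Ψ²₁,₁(y) = (y₃, 0, −y₁), Ψ³₁,₁(y) = (−y₂, y₁, 0), Ψ¹₂,₁(y) = (−2y₁²+y₂²+y₃², −3y₁y₂, −3y₁y₃), Ψ²₂,₁(y) = (−3y₁y₂, y₁²−2y₂²+y₃², −3y₂y₃), Ψ³₂,₁(y) = (−3y₁y₃, −3y₂y₃, y₁²+y₂²−2y₃²) are mode solutions with growth rate λ = 0; and these thirteen functions are linearly independent over ℂ. -/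
/- Self-similar coordinates on ℝ³ (Euclidean norm). -/
noncomputable abbrev E3 := EuclideanSpace ℝ (Fin 3)

/-- Partial derivative ∂ⱼ of a scalar function. -/
noncomputable def pd (j : Fin 3) (f : E3 → ℂ) (y : E3) : ℂ :=
  fderiv ℝ f y (EuclideanSpace.single j 1)

/-- Radial derivative operator (y·∇). -/
noncomputable def ydel (f : E3 → ℂ) (y : E3) : ℂ := ∑ j, (y j : ℂ) * pd j f y

/-- Componentwise Euclidean Laplacian. -/
noncomputable def lap (f : E3 → ℂ) (y : E3) : ℂ := ∑ j, pd j (pd j f) y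

/-- The operator 𝔐Ψ = ∇(y·Ψ) − Ψ − (div Ψ) y, i-th component. -/
noncomputable def Mop (Ψ : E3 → Fin 3 → ℂ) (y : E3) (i : Fin 3) : ℂ :=
  pd i (fun z => ∑ j, (z j : ℂ) * Ψ z j) y - Ψ y i
    - (∑ j, pd j (fun z => Ψ z j) y) * (y i : ℂ)

/-- A mode solution with growth rate `lam` of the linearised wave maps equation
(in self-similar coordinates, stereographic projection chart, about u₀(τ,y)=y):
smooth on the closed unit ball, not identically zero there, and solving the mode
equation for ‖y‖ < 1. -/
def IsModeSolution (lam : ℂ) (Ψ : E3 → Fin 3 → ℂ) : Prop :=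
  ContDiffOn ℝ (⊤ : ℕ∞) Ψ (Metric.closedBall 0 1) ∧
  (∃ y ∈ Metric.closedBall (0 : E3) 1, Ψ y ≠ 0) ∧
  ∀ y : E3, ‖y‖ < 1 → ∀ i : Fin 3,
    lap (fun z => Ψ z i) y
      - ydel (fun z => ydel (fun w => Ψ w i) z) y
      + ((3 * ((‖y‖ : ℝ) : ℂ)^2 - 5) / (1 + ((‖y‖ : ℝ) : ℂ)^2) - 2 * lam)
          * ydel (fun z => Ψ z i) y
      - lam^2 * Ψ y i
      - lam * ((1 - 3 * ((‖y‖ : ℝ) : ℂ)^2) / (1 + ((‖y‖ : ℝ) : ℂ)^2)) * Ψ y i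
      - (4 / (1 + ((‖y‖ : ℝ) : ℂ)^2)) * Mop Ψ y i
      + ((2 - 2 * ((‖y‖ : ℝ) : ℂ)^2) / (1 + ((‖y‖ : ℝ) : ℂ)^2)) * Ψ y i = 0

/-- Ψ₁,₀(y) = y. -/
noncomputable def Psi10 : E3 → Fin 3 → ℂ := fun y i => (y i : ℂ)

/-- Ψⁱ₀,₁(y) = eᵢ. -/
noncomputable def Psi01 (i : Fin 3) : E3 → Fin 3 → ℂ := fun _ j => if j = i then 1 else 0

/-- Φⁱ₀,₁(y) = (‖y‖² − 3) eᵢ. -/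
noncomputable def Phi01 (i : Fin 3) : E3 → Fin 3 → ℂ :=
  fun y j => (((‖y‖ : ℝ) : ℂ)^2 - 3) * (if j = i then 1 else 0)

/-- Ψᵏ₁,₁ : the rotation modes. -/
noncomputable def Psi11 : Fin 3 → E3 → Fin 3 → ℂ :=
  ![fun y => ![0, -((y 2 : ℝ) : ℂ), ((y 1 : ℝ) : ℂ)],
    fun y => ![((y 2 : ℝ) : ℂ), 0, -((y 0 : ℝ) : ℂ)],
    fun y => ![-((y 1 : ℝ) : ℂ), ((y 0 : ℝ) : ℂ), 0]]

/-- Ψᵏ₂,₁ : the quadratic modes. -/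
noncomputable def Psi21 : Fin 3 → E3 → Fin 3 → ℂ :=
  ![fun y => ![-2*((y 0 : ℝ) : ℂ)^2 + ((y 1 : ℝ) : ℂ)^2 + ((y 2 : ℝ) : ℂ)^2,
               -3*((y 0 : ℝ) : ℂ)*((y 1 : ℝ) : ℂ),
               -3*((y 0 : ℝ) : ℂ)*((y 2 : ℝ) : ℂ)],
    fun y => ![-3*((y 0 : ℝ) : ℂ)*((y 1 : ℝ) : ℂ),
               ((y 0 : ℝ) : ℂ)^2 - 2*((y 1 : ℝ) : ℂ)^2 + ((y 2 : ℝ) : ℂ)^2,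
               -3*((y 1 : ℝ) : ℂ)*((y 2 : ℝ) : ℂ)],
    fun y => ![-3*((y 0 : ℝ) : ℂ)*((y 2 : ℝ) : ℂ),
               -3*((y 1 : ℝ) : ℂ)*((y 2 : ℝ) : ℂ),
               ((y 0 : ℝ) : ℂ)^2 + ((y 1 : ℝ) : ℂ)^2 - 2*((y 2 : ℝ) : ℂ)^2]]

/-- The thirteen symmetry-generated functions. -/
noncomputable def symFuns : Fin 13 → (E3 → Fin 3 → ℂ) :=
  ![Psi10, Psi01 0, Psi01 1, Psi01 2,
    Phi01 0, Phi01 1, Phi01 2,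
    Psi11 0, Psi11 1, Psi11 2,
    Psi21 0, Psi21 1, Psi21 2]

/-! ### Auxiliary machinery -/

noncomputable def cf (k : Fin 3) (z : E3) : ℂ := ((z k : ℝ) : ℂ)

lemma hasFDerivAt_cf (k : Fin 3) (y : E3) :
    HasFDerivAt (cf k) (Complex.ofRealCLM.comp (EuclideanSpace.proj k : E3 →L[ℝ] ℝ)) y :=
  (Complex.ofRealCLM.comp (EuclideanSpace.proj k : E3 →L[ℝ] ℝ)).hasFDerivAt

@[fun_prop] lemma differentiable_cf (k : Fin 3) : Differentiable ℝ (cf k) :=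
  fun y => (hasFDerivAt_cf k y).differentiableAt

@[fun_prop] lemma contDiff_cf (k : Fin 3) : ContDiff ℝ (⊤ : ℕ∞) (cf k) :=
  (Complex.ofRealCLM.comp (EuclideanSpace.proj k : E3 →L[ℝ] ℝ)).contDiff

lemma pd_cf (j k : Fin 3) (y : E3) : pd j (cf k) y = if k = j then 1 else 0 := by
  rw [pd, (hasFDerivAt_cf k y).fderiv]
  simp [EuclideanSpace.single_apply]
  split_ifs with h1 h2 h2 <;> simp_all [eq_comm]

lemma pd_const (j : Fin 3) (a : ℂ) (y : E3) : pd j (fun _ => a) y = 0 := by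
  simp [pd]

lemma pd_add {f g : E3 → ℂ} {y : E3} (hf : DifferentiableAt ℝ f y) (hg : DifferentiableAt ℝ g y)
    (j : Fin 3) : pd j (fun z => f z + g z) y = pd j f y + pd j g y := by
  simp [pd, fderiv_fun_add hf hg]

lemma pd_mul {f g : E3 → ℂ} {y : E3} (hf : DifferentiableAt ℝ f y) (hg : DifferentiableAt ℝ g y)
    (j : Fin 3) : pd j (fun z => f z * g z) y = f y * pd j g y + g y * pd j f y := by
  rw [pd, pd, pd, (hf.hasFDerivAt.fun_mul hg.hasFDerivAt).fderiv]
  simp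

lemma pd_const_mul {f : E3 → ℂ} {y : E3} (hf : DifferentiableAt ℝ f y) (a : ℂ)
    (j : Fin 3) : pd j (fun z => a * f z) y = a * pd j f y := by
  simp [pd, (hf.hasFDerivAt.const_mul a).fderiv]

lemma pd_cf_pow (j k : Fin 3) (n : ℕ) (y : E3) :
    pd j (fun z => cf k z ^ n) y = n * cf k y ^ (n - 1) * (if k = j then 1 else 0) := by
  induction n with
  | zero => simp [pd_const]
  | succ n ih =>
    have h : (fun z => cf k z ^ (n+1)) = fun z => (cf k z ^ n) * cf k z := by
      funext z; ring
    rw [h, pd_mul (by fun_prop) (by fun_prop), pd_cf, ih]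
    cases n with
    | zero => simp
    | succ m => split_ifs <;> push_cast <;> ring

abbrev MnQ := ℂ × ℕ × ℕ × ℕ
abbrev PolyQ := List MnQ

noncomputable def evalM (m : MnQ) (z : E3) : ℂ :=
  m.1 * cf 0 z ^ m.2.1 * cf 1 z ^ m.2.2.1 * cf 2 z ^ m.2.2.2

noncomputable def evalP : PolyQ → E3 → ℂ
  | [], _ => 0
  | m :: p, z => evalM m z + evalP p z

def pdM (j : Fin 3) (m : MnQ) : MnQ :=
  if j = 0 then (m.1 * m.2.1, m.2.1 - 1, m.2.2.1, m.2.2.2)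
  else if j = 1 then (m.1 * m.2.2.1, m.2.1, m.2.2.1 - 1, m.2.2.2)
  else (m.1 * m.2.2.2, m.2.1, m.2.2.1, m.2.2.2 - 1)

def pdP (j : Fin 3) (p : PolyQ) : PolyQ := p.map (pdM j)

@[fun_prop] lemma differentiable_evalM (m : MnQ) : Differentiable ℝ (evalM m) := by
  unfold evalM; fun_prop

@[fun_prop] lemma contDiff_evalM (m : MnQ) : ContDiff ℝ (⊤ : ℕ∞) (evalM m) := by
  unfold evalM; fun_prop

@[fun_prop] lemma differentiable_evalP (p : PolyQ) : Differentiable ℝ (evalP p) := by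
  induction p with
  | nil =>
    have h : evalP [] = fun _ : E3 => (0 : ℂ) := rfl
    rw [h]; fun_prop
  | cons m p ih =>
    have h : evalP (m :: p) = fun z => evalM m z + evalP p z := rfl
    rw [h]; fun_prop

@[fun_prop] lemma contDiff_evalP (p : PolyQ) : ContDiff ℝ (⊤ : ℕ∞) (evalP p) := by
  induction p with
  | nil =>
    have h : evalP [] = fun _ : E3 => (0 : ℂ) := rfl
    rw [h]; fun_prop
  | cons m p ih =>
    have h : evalP (m :: p) = fun z => evalM m z + evalP p z := rfl
    rw [h]; fun_prop

lemma pd_evalM (j : Fin 3) (m : MnQ) (y : E3) : pd j (evalM m) y = evalM (pdM j m) y := by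
  obtain ⟨a, e0, e1, e2⟩ := m
  have h : evalM (a, e0, e1, e2) = fun z => (a * cf 0 z ^ e0 * cf 1 z ^ e1) * cf 2 z ^ e2 := rfl
  rw [h, pd_mul (f := fun z => a * cf 0 z ^ e0 * cf 1 z ^ e1) (g := fun z => cf 2 z ^ e2)
        (by fun_prop) (by fun_prop)]
  rw [show (fun z => a * cf 0 z ^ e0 * cf 1 z ^ e1)
        = fun z => (a * cf 0 z ^ e0) * cf 1 z ^ e1 from rfl]
  rw [pd_mul (f := fun z => a * cf 0 z ^ e0) (g := fun z => cf 1 z ^ e1)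
        (by fun_prop) (by fun_prop)]
  rw [pd_const_mul (f := fun z => cf 0 z ^ e0) (by fun_prop) a]
  rw [pd_cf_pow, pd_cf_pow, pd_cf_pow]
  fin_cases j <;> simp [pdM, evalM] <;> ring

lemma pd_evalP (j : Fin 3) (p : PolyQ) (y : E3) : pd j (evalP p) y = evalP (pdP j p) y := by
  induction p with
  | nil =>
    have h : evalP [] = fun _ : E3 => (0 : ℂ) := rfl
    rw [h, pd_const]; rfl
  | cons m p ih =>
    have h : evalP (m :: p) = fun z => evalM m z + evalP p z := rfl
    rw [h, pd_add (by fun_prop) (by fun_prop), pd_evalM, ih]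
    rfl

lemma evalP_append (p q : PolyQ) (z : E3) : evalP (p ++ q) z = evalP p z + evalP q z := by
  induction p with
  | nil => simp [evalP]
  | cons m p ih => simp [evalP, ih]; ring

def mX (j : Fin 3) (m : MnQ) : MnQ :=
  if j = 0 then (m.1, m.2.1 + 1, m.2.2.1, m.2.2.2)
  else if j = 1 then (m.1, m.2.1, m.2.2.1 + 1, m.2.2.2)
  else (m.1, m.2.1, m.2.2.1, m.2.2.2 + 1)

def mulX (j : Fin 3) (p : PolyQ) : PolyQ := p.map (mX j)

lemma evalP_mulX (j : Fin 3) (p : PolyQ) (z : E3) :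
    evalP (mulX j p) z = cf j z * evalP p z := by
  induction p with
  | nil => simp [evalP, mulX]
  | cons m p ih =>
    have h1 : evalP (mulX j (m :: p)) = fun w => evalM (mX j m) w + evalP (mulX j p) w := rfl
    rw [h1]
    have h2 : evalM (mX j m) z = cf j z * evalM m z := by
      obtain ⟨a, e0, e1, e2⟩ := m
      fin_cases j <;> simp [mX, evalM] <;> ring
    simp only [evalP]
    rw [h2, ih]; ring

def lapP (p : PolyQ) : PolyQ := pdP 0 (pdP 0 p) ++ pdP 1 (pdP 1 p) ++ pdP 2 (pdP 2 p)

def ydelP (p : PolyQ) : PolyQ := mulX 0 (pdP 0 p) ++ mulX 1 (pdP 1 p) ++ mulX 2 (pdP 2 p)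

def dotP (P : Fin 3 → PolyQ) : PolyQ := mulX 0 (P 0) ++ mulX 1 (P 1) ++ mulX 2 (P 2)

lemma pd_fun_evalP (j : Fin 3) (p : PolyQ) : pd j (evalP p) = evalP (pdP j p) :=
  funext fun y => pd_evalP j p y

lemma lap_evalP (p : PolyQ) (y : E3) : lap (evalP p) y = evalP (lapP p) y := by
  rw [lap, Fin.sum_univ_three]
  simp only [pd_fun_evalP, pd_evalP]
  rw [lapP, evalP_append, evalP_append]

lemma ydel_evalP (p : PolyQ) (y : E3) : ydel (evalP p) y = evalP (ydelP p) y := by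
  rw [ydel, Fin.sum_univ_three, pd_evalP, pd_evalP, pd_evalP, ydelP,
    evalP_append, evalP_append, evalP_mulX, evalP_mulX, evalP_mulX]
  rfl

lemma ydel_fun_evalP (p : PolyQ) : (fun z => ydel (evalP p) z) = evalP (ydelP p) :=
  funext fun y => ydel_evalP p y

lemma normsq (z : E3) :
    ((‖z‖ : ℝ) : ℂ)^2 = ((z 0 : ℝ) : ℂ)^2 + ((z 1 : ℝ) : ℂ)^2 + ((z 2 : ℝ) : ℂ)^2 := by
  have h : ‖z‖^2 = (z 0)^2 + (z 1)^2 + (z 2)^2 := by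
    rw [EuclideanSpace.norm_eq, Real.sq_sqrt (by positivity)]
    simp [Fin.sum_univ_three, sq_abs]
  calc ((‖z‖ : ℝ) : ℂ)^2 = ((‖z‖^2 : ℝ) : ℂ) := by push_cast; ring
    _ = _ := by rw [h]; push_cast; ring

noncomputable def RHSval (lam : ℂ) (P : Fin 3 → PolyQ) (y : E3) (i : Fin 3) : ℂ :=
  evalP (lapP (P i)) y - evalP (ydelP (ydelP (P i))) y
    + ((3 * ((‖y‖ : ℝ) : ℂ)^2 - 5) / (1 + ((‖y‖ : ℝ) : ℂ)^2) - 2 * lam)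
        * evalP (ydelP (P i)) y
    - lam^2 * evalP (P i) y
    - lam * ((1 - 3 * ((‖y‖ : ℝ) : ℂ)^2) / (1 + ((‖y‖ : ℝ) : ℂ)^2)) * evalP (P i) y
    - (4 / (1 + ((‖y‖ : ℝ) : ℂ)^2)) *
        (evalP (pdP i (dotP P)) y - evalP (P i) y
          - (evalP (pdP 0 (P 0)) y + evalP (pdP 1 (P 1)) y + evalP (pdP 2 (P 2)) y) * (y i : ℂ))
    + ((2 - 2 * ((‖y‖ : ℝ) : ℂ)^2) / (1 + ((‖y‖ : ℝ) : ℂ)^2)) * evalP (P i) y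

lemma mode_cond (lam : ℂ) (Ψ : E3 → Fin 3 → ℂ) (P : Fin 3 → PolyQ)
    (hΨ : ∀ j, (fun z => Ψ z j) = evalP (P j))
    (key : ∀ y : E3, (1 + ((‖y‖ : ℝ) : ℂ)^2) ≠ 0 → ∀ i : Fin 3, RHSval lam P y i = 0) :
    ∀ y : E3, ‖y‖ < 1 → ∀ i : Fin 3,
    lap (fun z => Ψ z i) y
      - ydel (fun z => ydel (fun w => Ψ w i) z) y
      + ((3 * ((‖y‖ : ℝ) : ℂ)^2 - 5) / (1 + ((‖y‖ : ℝ) : ℂ)^2) - 2 * lam)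
          * ydel (fun z => Ψ z i) y
      - lam^2 * Ψ y i
      - lam * ((1 - 3 * ((‖y‖ : ℝ) : ℂ)^2) / (1 + ((‖y‖ : ℝ) : ℂ)^2)) * Ψ y i
      - (4 / (1 + ((‖y‖ : ℝ) : ℂ)^2)) * Mop Ψ y i
      + ((2 - 2 * ((‖y‖ : ℝ) : ℂ)^2) / (1 + ((‖y‖ : ℝ) : ℂ)^2)) * Ψ y i = 0 := by
  intro y _ i
  have hψ : ∀ j z, Ψ z j = evalP (P j) z := fun j z => congrFun (hΨ j) z
  have h1 : (1 + ((‖y‖ : ℝ) : ℂ)^2) ≠ 0 := by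
    have h0 : (0:ℝ) < 1 + ‖y‖^2 := by positivity
    have he : ((1 + ‖y‖^2 : ℝ) : ℂ) = 1 + ((‖y‖ : ℝ) : ℂ)^2 := by push_cast; ring
    rw [← he]
    exact_mod_cast h0.ne'
  have hlap : lap (fun z => Ψ z i) y = evalP (lapP (P i)) y := by rw [hΨ i, lap_evalP]
  have hyd : ydel (fun z => Ψ z i) y = evalP (ydelP (P i)) y := by rw [hΨ i, ydel_evalP]
  have hyd2 : ydel (fun z => ydel (fun w => Ψ w i) z) y = evalP (ydelP (ydelP (P i))) y := by
    rw [hΨ i, ydel_fun_evalP, ydel_evalP]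
  have hMop : Mop Ψ y i = evalP (pdP i (dotP P)) y - evalP (P i) y
      - (evalP (pdP 0 (P 0)) y + evalP (pdP 1 (P 1)) y + evalP (pdP 2 (P 2)) y) * (y i : ℂ) := by
    have hdot : (fun z : E3 => ∑ j, (z j : ℂ) * Ψ z j) = evalP (dotP P) := by
      funext z
      rw [Fin.sum_univ_three, hψ 0 z, hψ 1 z, hψ 2 z,
        dotP, evalP_append, evalP_append, evalP_mulX, evalP_mulX, evalP_mulX]
      rfl
    rw [Mop, hdot, pd_evalP, Fin.sum_univ_three, hΨ 0, hΨ 1, hΨ 2,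
      pd_evalP, pd_evalP, pd_evalP, hψ i y]
  rw [hlap, hyd2, hyd, hMop, hψ i y]
  exact key y h1 i

lemma smooth_of_poly (Ψ : E3 → Fin 3 → ℂ) (P : Fin 3 → PolyQ)
    (hΨ : ∀ j, (fun z => Ψ z j) = evalP (P j)) :
    ContDiffOn ℝ (⊤ : ℕ∞) Ψ (Metric.closedBall 0 1) := by
  apply ContDiff.contDiffOn
  rw [contDiff_pi]
  intro i
  rw [hΨ i]
  exact contDiff_evalP (P i)


noncomputable def P10 : Fin 3 → PolyQ :=
  ![[((1:ℂ),1,0,0)], [((1:ℂ),0,1,0)], [((1:ℂ),0,0,1)]]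

lemma hP10 : ∀ j, (fun z => Psi10 z j) = evalP (P10 j) := by
  intro j
  funext z
  fin_cases j <;> simp [Psi10, P10, evalP, evalM, cf]

set_option maxHeartbeats 1000000 in
lemma isMode_Psi10 : IsModeSolution 1 Psi10 := by
  refine ⟨smooth_of_poly _ _ hP10, ⟨EuclideanSpace.single 0 1, ?_, ?_⟩,
    mode_cond 1 Psi10 P10 hP10 ?_⟩
  · rw [mem_closedBall_zero_iff, EuclideanSpace.norm_single]; norm_num
  · intro h
    have hc := congrFun h 0
    simp [Psi10, EuclideanSpace.single_apply] at hc
  · intro y h1 i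
    rw [normsq y] at h1
    simp only [RHSval]
    rw [normsq y]
    fin_cases i <;>
    · simp [P10, lapP, ydelP, dotP, pdP, pdM, mulX, mX, evalP, evalM, cf]
      field_simp
      ring

noncomputable def P01 (i : Fin 3) : Fin 3 → PolyQ :=
  fun j => if j = i then [((1:ℂ),0,0,0)] else []

lemma hP01 (i : Fin 3) : ∀ j, (fun z => Psi01 i z j) = evalP (P01 i j) := by
  intro j
  funext z
  by_cases h : j = i <;> simp [Psi01, P01, h, evalP, evalM]

set_option maxHeartbeats 1000000 in
lemma isMode_Psi01 (i : Fin 3) : IsModeSolution 1 (Psi01 i) := by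
  refine ⟨smooth_of_poly _ _ (hP01 i), ⟨0, by simp, ?_⟩,
    mode_cond 1 (Psi01 i) (P01 i) (hP01 i) ?_⟩
  · intro h
    have hc := congrFun h i
    simp [Psi01] at hc
  · intro y h1 i'
    rw [normsq y] at h1
    simp only [RHSval]
    rw [normsq y]
    fin_cases i <;> fin_cases i' <;>
    · simp [P01, lapP, ydelP, dotP, pdP, pdM, mulX, mX, evalP, evalM, cf]
      try field_simp
      try ring

noncomputable def PPhi (i : Fin 3) : Fin 3 → PolyQ :=
  fun j => if j = i then
    [((1:ℂ),2,0,0), ((1:ℂ),0,2,0), ((1:ℂ),0,0,2), ((-3:ℂ),0,0,0)] else []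

lemma hPPhi (i : Fin 3) : ∀ j, (fun z => Phi01 i z j) = evalP (PPhi i j) := by
  intro j
  funext z
  by_cases h : j = i
  · simp only [Phi01, PPhi, h, if_pos rfl]
    rw [normsq z]
    simp [evalP, evalM, cf]
    ring
  · simp [Phi01, PPhi, h, evalP]

set_option maxHeartbeats 1000000 in
lemma isMode_Phi01 (i : Fin 3) : IsModeSolution 0 (Phi01 i) := by
  refine ⟨smooth_of_poly _ _ (hPPhi i), ⟨0, by simp, ?_⟩,
    mode_cond 0 (Phi01 i) (PPhi i) (hPPhi i) ?_⟩
  · intro h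
    have hc := congrFun h i
    simp [Phi01] at hc
  · intro y h1 i'
    rw [normsq y] at h1
    simp only [RHSval]
    rw [normsq y]
    fin_cases i <;> fin_cases i' <;>
    · simp [PPhi, lapP, ydelP, dotP, pdP, pdM, mulX, mX, evalP, evalM, cf]
      try field_simp
      try ring
      try tauto

noncomputable def P11 : Fin 3 → Fin 3 → PolyQ :=
  ![![[], [((-1:ℂ),0,0,1)], [((1:ℂ),0,1,0)]],
    ![[((1:ℂ),0,0,1)], [], [((-1:ℂ),1,0,0)]],
    ![[((-1:ℂ),0,1,0)], [((1:ℂ),1,0,0)], []]]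

lemma hP11 (k : Fin 3) : ∀ j, (fun z => Psi11 k z j) = evalP (P11 k j) := by
  intro j
  funext z
  fin_cases k <;> fin_cases j <;> simp [Psi11, P11, evalP, evalM, cf]

set_option maxHeartbeats 1000000 in
lemma isMode_Psi11 (k : Fin 3) : IsModeSolution 0 (Psi11 k) := by
  refine ⟨smooth_of_poly _ _ (hP11 k), ?_, mode_cond 0 (Psi11 k) (P11 k) (hP11 k) ?_⟩
  · fin_cases k
    · exact ⟨EuclideanSpace.single 1 1,
        by rw [mem_closedBall_zero_iff, EuclideanSpace.norm_single]; norm_num,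
        fun h => by simpa [Psi11, EuclideanSpace.single_apply] using congrFun h 2⟩
    · exact ⟨EuclideanSpace.single 2 1,
        by rw [mem_closedBall_zero_iff, EuclideanSpace.norm_single]; norm_num,
        fun h => by simpa [Psi11, EuclideanSpace.single_apply] using congrFun h 0⟩
    · exact ⟨EuclideanSpace.single 0 1,
        by rw [mem_closedBall_zero_iff, EuclideanSpace.norm_single]; norm_num,
        fun h => by simpa [Psi11, EuclideanSpace.single_apply] using congrFun h 1⟩
  · intro y h1 i'
    rw [normsq y] at h1
    simp only [RHSval]
    rw [normsq y]
    fin_cases k <;> fin_cases i' <;>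
    · simp [P11, lapP, ydelP, dotP, pdP, pdM, mulX, mX, evalP, evalM, cf]
      try field_simp
      try ring
      try tauto

noncomputable def P21 : Fin 3 → Fin 3 → PolyQ :=
  ![![[((-2:ℂ),2,0,0), ((1:ℂ),0,2,0), ((1:ℂ),0,0,2)], [((-3:ℂ),1,1,0)], [((-3:ℂ),1,0,1)]],
    ![[((-3:ℂ),1,1,0)], [((1:ℂ),2,0,0), ((-2:ℂ),0,2,0), ((1:ℂ),0,0,2)], [((-3:ℂ),0,1,1)]],
    ![[((-3:ℂ),1,0,1)], [((-3:ℂ),0,1,1)], [((1:ℂ),2,0,0), ((1:ℂ),0,2,0), ((-2:ℂ),0,0,2)]]]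

lemma hP21 (k : Fin 3) : ∀ j, (fun z => Psi21 k z j) = evalP (P21 k j) := by
  intro j
  funext z
  fin_cases k <;> fin_cases j <;> simp [Psi21, P21, evalP, evalM, cf] <;> ring

set_option maxHeartbeats 1000000 in
lemma isMode_Psi21 (k : Fin 3) : IsModeSolution 0 (Psi21 k) := by
  refine ⟨smooth_of_poly _ _ (hP21 k), ?_, mode_cond 0 (Psi21 k) (P21 k) (hP21 k) ?_⟩
  · fin_cases k
    · exact ⟨EuclideanSpace.single 0 1,
        by rw [mem_closedBall_zero_iff, EuclideanSpace.norm_single]; norm_num,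
        fun h => by simpa [Psi21, EuclideanSpace.single_apply] using congrFun h 0⟩
    · exact ⟨EuclideanSpace.single 1 1,
        by rw [mem_closedBall_zero_iff, EuclideanSpace.norm_single]; norm_num,
        fun h => by simpa [Psi21, EuclideanSpace.single_apply] using congrFun h 1⟩
    · exact ⟨EuclideanSpace.single 2 1,
        by rw [mem_closedBall_zero_iff, EuclideanSpace.norm_single]; norm_num,
        fun h => by simpa [Psi21, EuclideanSpace.single_apply] using congrFun h 2⟩
  · intro y h1 i'
    rw [normsq y] at h1
    simp only [RHSval]
    rw [normsq y]
    fin_cases k <;> fin_cases i' <;>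
    · simp [P21, lapP, ydelP, dotP, pdP, pdM, mulX, mX, evalP, evalM, cf]
      try field_simp
      try ring
      try tauto

lemma sum13 (f : Fin 13 → ℂ) :
    ∑ i, f i = f 0 + f 1 + f 2 + f 3 + f 4 + f 5 + f 6 + f 7 + f 8 + f 9 + f 10 + f 11 + f 12 := by
  rw [Fin.sum_univ_castSucc, Fin.sum_univ_castSucc, Fin.sum_univ_castSucc,
    Fin.sum_univ_castSucc, Fin.sum_univ_castSucc, Fin.sum_univ_eight]
  rfl

set_option maxHeartbeats 2000000 in
lemma linind : LinearIndependent ℂ symFuns := by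
  rw [Fintype.linearIndependent_iff]
  intro g hg
  have E : ∀ (y : E3) (j : Fin 3),
      g 0 * Psi10 y j + g 1 * Psi01 0 y j + g 2 * Psi01 1 y j + g 3 * Psi01 2 y j
      + g 4 * Phi01 0 y j + g 5 * Phi01 1 y j + g 6 * Phi01 2 y j
      + g 7 * Psi11 0 y j + g 8 * Psi11 1 y j + g 9 * Psi11 2 y j
      + g 10 * Psi21 0 y j + g 11 * Psi21 1 y j + g 12 * Psi21 2 y j = 0 := by
    intro y j
    have h := congrFun (congrFun hg y) j
    rw [Finset.sum_apply, Finset.sum_apply] at h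
    rw [sum13 (fun i => (g i • symFuns i) y j)] at h
    simpa [symFuns, smul_eq_mul] using h
  have H0 := E 0 0
  have H1 := E 0 1
  have H2 := E 0 2
  have H3 := E (EuclideanSpace.single 0 1) 0
  have H4 := E (EuclideanSpace.single 0 1) 1
  have H5 := E (EuclideanSpace.single 0 1) 2
  have H6 := E (EuclideanSpace.single 1 1) 0
  have H7 := E (EuclideanSpace.single 1 1) 1
  have H8 := E (EuclideanSpace.single 1 1) 2
  have H9 := E (EuclideanSpace.single 2 1) 0
  have H10 := E (EuclideanSpace.single 2 1) 1
  have H11 := E (EuclideanSpace.single 2 1) 2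
  have H12 := E (EuclideanSpace.single 0 2) 0
  clear E hg
  simp only [Psi10, Psi01, Phi01, Psi11, Psi21,
    Matrix.cons_val_zero, Matrix.cons_val_one, Matrix.head_cons, Matrix.cons_val_two,
    Matrix.tail_cons, EuclideanSpace.single_apply, EuclideanSpace.norm_single,
    PiLp.zero_apply, norm_zero, norm_one] at H0 H1 H2 H3 H4 H5 H6 H7 H8 H9 H10 H11 H12
  simp at H0 H1 H2 H3 H4 H5 H6 H7 H8 H9 H10 H11 H12
  have D : ∀ t : Fin 13, g t = 0 → g t = 0 := fun _ h => h
  have e0 : g 0 = 0 := by linear_combination (-3/2 : ℂ) * H0 + 2 * H3 + (-1/2 : ℂ) * H12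
  have e1 : g 1 = 0 := by linear_combination (-1/2 : ℂ) * H0 - H3 + H4 + H5 + H6 - H8 + H9 - H10 + (1/2 : ℂ) * H12
  have e2 : g 2 = 0 := by linear_combination (3/2 : ℂ) * H0 - 2 * H1 - 2 * H3 + H4 - H5 + H6 + H7 + H8 - H9 + H10 + (1/2 : ℂ) * H12
  have e3 : g 3 = 0 := by linear_combination (3/2 : ℂ) * H0 - 2 * H2 - 2 * H3 - H4 + H5 - H6 + H8 + H9 + H10 + H11 + (1/2 : ℂ) * H12
  have e4 : g 4 = 0 := by linear_combination (-1/2 : ℂ) * H0 + (-1/3 : ℂ) * H3 + (1/3 : ℂ) * H4 + (1/3 : ℂ) * H5 + (1/3 : ℂ) * H6 + (-1/3 : ℂ) * H8 + (1/3 : ℂ) * H9 + (-1/3 : ℂ) * H10 + (1/6 : ℂ) * H12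
  have e5 : g 5 = 0 := by linear_combination (1/2 : ℂ) * H0 - H1 + (-2/3 : ℂ) * H3 + (1/3 : ℂ) * H4 + (-1/3 : ℂ) * H5 + (1/3 : ℂ) * H6 + (1/3 : ℂ) * H7 + (1/3 : ℂ) * H8 + (-1/3 : ℂ) * H9 + (1/3 : ℂ) * H10 + (1/6 : ℂ) * H12
  have e6 : g 6 = 0 := by linear_combination (1/2 : ℂ) * H0 - H2 + (-2/3 : ℂ) * H3 + (-1/3 : ℂ) * H4 + (1/3 : ℂ) * H5 + (-1/3 : ℂ) * H6 + (1/3 : ℂ) * H8 + (1/3 : ℂ) * H9 + (1/3 : ℂ) * H10 + (1/3 : ℂ) * H11 + (1/6 : ℂ) * H12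
  have e7 : g 7 = 0 := by linear_combination (1/2 : ℂ) * H4 + (-1/2 : ℂ) * H5 + (1/2 : ℂ) * H6 + (1/2 : ℂ) * H8 + (-1/2 : ℂ) * H9 + (-1/2 : ℂ) * H10
  have e8 : g 8 = 0 := by linear_combination (-1/2 : ℂ) * H4 + (-1/2 : ℂ) * H5 + (-1/2 : ℂ) * H6 + (1/2 : ℂ) * H8 + (1/2 : ℂ) * H9 + (1/2 : ℂ) * H10
  have e9 : g 9 = 0 := by linear_combination (1/2 : ℂ) * H4 + (1/2 : ℂ) * H5 + (-1/2 : ℂ) * H6 + (-1/2 : ℂ) * H8 + (1/2 : ℂ) * H9 + (-1/2 : ℂ) * H10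
  have e10 : g 10 = 0 := by linear_combination (-1/2 : ℂ) * H0 + (1/3 : ℂ) * H3 + (1/6 : ℂ) * H4 + (1/6 : ℂ) * H5 + (1/6 : ℂ) * H6 + (-1/6 : ℂ) * H8 + (1/6 : ℂ) * H9 + (-1/6 : ℂ) * H10 + (-1/6 : ℂ) * H12
  have e11 : g 11 = 0 := by linear_combination (-1/2 : ℂ) * H0 + (2/3 : ℂ) * H3 + (1/6 : ℂ) * H4 + (-1/6 : ℂ) * H5 + (1/6 : ℂ) * H6 + (-1/3 : ℂ) * H7 + (1/6 : ℂ) * H8 + (-1/6 : ℂ) * H9 + (1/6 : ℂ) * H10 + (-1/6 : ℂ) * H12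
  have e12 : g 12 = 0 := by linear_combination (-1/2 : ℂ) * H0 + (2/3 : ℂ) * H3 + (-1/6 : ℂ) * H4 + (1/6 : ℂ) * H5 + (-1/6 : ℂ) * H6 + (1/6 : ℂ) * H8 + (1/6 : ℂ) * H9 + (1/6 : ℂ) * H10 + (-1/3 : ℂ) * H11 + (-1/6 : ℂ) * H12
  intro t
  fin_cases t
  · exact e0
  · exact e1
  · exact e2
  · exact e3
  · exact e4
  · exact e5
  · exact e6
  · exact e7
  · exact e8
  · exact e9
  · exact e10
  · exact e11
  · exact e12

/-- The symmetry-generated functions are mode solutions with the indicated growth rates,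
and they are linearly independent over ℂ. -/
theorem symmetry_modes :
    IsModeSolution 1 Psi10 ∧
    (∀ i : Fin 3, IsModeSolution 1 (Psi01 i)) ∧
    (∀ i : Fin 3, IsModeSolution 0 (Phi01 i)) ∧
    (∀ k : Fin 3, IsModeSolution 0 (Psi11 k)) ∧
    (∀ k : Fin 3, IsModeSolution 0 (Psi21 k)) ∧
    LinearIndependent ℂ symFuns :=
  ⟨isMode_Psi10, isMode_Psi01, isMode_Phi01, isMode_Psi11, isMode_Psi21, linind⟩
end

section
/- Let n₀ ∈ ℕ and y ∈ (0,1). Let (a_n)_{n>n₀} and (b_n)_{n>n₀} be complex sequences and (ā_n)_{n>n₀}, (b̄_n)_{n>n₀} nonnegative real sequences such that |a_n| ≤ ā_n, |b_n| ≤ b̄_n and ā_n + b̄_n · y/(1−y) ≤ y for all n > n₀. Suppose (e_n)_{n ≥ n₀} is a sequence of complex numbers with |e_{n₀}| ≤ y such that for every n > n₀ one has 1 + e_{n−1} ≠ 0 and e_n = a_n + b_n · e_{n−1}/(1 + e_{n−1}). Then |e_n| ≤ y for all n ≥ n₀. -/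
lemma frac_bound (y : ℝ) (hy1 : y < 1) (x : ℂ) (hx : ‖x‖ ≤ y) (hnz : 1 + x ≠ 0) :
    ‖x / (1 + x)‖ ≤ y / (1 - y) := by
  have hy0 : 0 ≤ y := le_trans (norm_nonneg x) hx
  have h1 : (1 : ℝ) - y ≤ ‖1 + x‖ := by
    have h := norm_sub_norm_le (1:ℂ) (-x)
    simp only [norm_one, norm_neg, sub_neg_eq_add] at h
    linarith
  have hpos : (0:ℝ) < 1 - y := by linarith
  rw [norm_div]
  exact div_le_div₀ hy0 hx hpos h1

/-- The inductive error-propagation estimate of the quasi-solution method. -/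
theorem error_propagation (n₀ : ℕ) (y : ℝ) (hy0 : 0 < y) (hy1 : y < 1)
    (a b : ℕ → ℂ) (abar bbar : ℕ → ℝ)
    (habar : ∀ n : ℕ, n₀ < n → 0 ≤ abar n)
    (hbbar : ∀ n : ℕ, n₀ < n → 0 ≤ bbar n)
    (ha : ∀ n : ℕ, n₀ < n → ‖a n‖ ≤ abar n)
    (hb : ∀ n : ℕ, n₀ < n → ‖b n‖ ≤ bbar n)
    (hclose : ∀ n : ℕ, n₀ < n → abar n + bbar n * (y/(1 - y)) ≤ y)
    (e : ℕ → ℂ) (he0 : ‖e n₀‖ ≤ y)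
    (hnz : ∀ n : ℕ, n₀ < n → 1 + e (n - 1) ≠ 0)
    (hrec : ∀ n : ℕ, n₀ < n → e n = a n + b n * (e (n - 1) / (1 + e (n - 1)))) :
    ∀ n : ℕ, n₀ ≤ n → ‖e n‖ ≤ y := by
  intro n hn
  induction n with
  | zero => simpa [Nat.le_zero.mp hn] using he0
  | succ m ih =>
    rcases Nat.lt_or_ge n₀ (m+1) with h | h
    · rcases Nat.eq_or_lt_of_le hn with heq | _
      · simpa [← heq] using he0
      have hm : n₀ ≤ m := Nat.lt_succ_iff.mp h
      have ihm : ‖e m‖ ≤ y := ih hm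
      have hnz' := hnz (m+1) h
      simp only [Nat.add_sub_cancel] at hnz'
      have hfrac := frac_bound y hy1 (e m) ihm hnz'
      calc ‖e (m+1)‖ = ‖a (m+1) + b (m+1) * (e m / (1 + e m))‖ := by
              rw [hrec (m+1) h]; simp
        _ ≤ ‖a (m+1)‖ + ‖b (m+1)‖ * ‖e m / (1 + e m)‖ := by
              calc ‖a (m+1) + b (m+1) * (e m / (1 + e m))‖
                  ≤ ‖a (m+1)‖ + ‖b (m+1) * (e m / (1 + e m))‖ := norm_add_le _ _
                _ = ‖a (m+1)‖ + ‖b (m+1)‖ * ‖e m / (1 + e m)‖ := by rw [norm_mul]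
        _ ≤ abar (m+1) + bbar (m+1) * (y / (1 - y)) := by
              have hby : (0:ℝ) ≤ y / (1 - y) :=
                div_nonneg hy0.le (by linarith)
              exact add_le_add (ha _ h)
                (mul_le_mul (hb _ h) hfrac (norm_nonneg _) (hbbar _ h))
        _ ≤ y := hclose _ h
    · have : n₀ = m + 1 := le_antisymm hn h
      simpa [← this] using he0
end
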